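/- arXiv:nlin/0307020 — 2 statements merged into one kernel-verified Lean document; each statement's English description precedes it below -/
import Mathlib

section
/- For every n with 1 ≤ n ≤ D+1, the reduced word of φⁿ(c_D) has length 2D + 4n − 3. -/
abbrev G : Type := FreeGroup (ℤ ⊕ ℤ)

/-- generator cₙ -/
def c (n : ℤ) : G := FreeGroup.of (Sum.inl n)
/-- generator uₙ -/
def u (n : ℤ) : G := FreeGroup.of (Sum.inr n)

/-- F = c₁ c₂ ⋯ c_D -/
def F (D : ℕ) : G := ((List.range D).map (fun i => c ((i : ℤ) + 1))).prod

/-- the tangle endomorphism for minimum delay time D -/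
def φ (D : ℕ) : G →* G := FreeGroup.lift fun x =>
  match x with
  | Sum.inl n => if n = (D : ℤ) then (F D)⁻¹ * (u 0)⁻¹ * F D else c (n + 1)
  | Sum.inr n => u (n + 1)

/-!
For `m ≤ D` put `A m = u₀ c₁ u₁ c₂ ⋯ u_{m-1} c_m`. Since `φ F = c₁⁻¹ u₀⁻¹ F`, and
`u₀ c₁ φ (A m) = A (m + 1)` as long as `c_D` does not occur in `A m`, induction gives
`φ^[m] F = (A m)⁻¹ F`, hence `φ^[m+1] c_D = F⁻¹ A_m u_m⁻¹ A_m⁻¹ F`. Spelled out letter by letter,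
`c_D⁻¹ ⋯ c₁⁻¹ · u₀ c₁ ⋯ u_{m-1} c_m · u_m⁻¹ · c_m⁻¹ u_{m-1}⁻¹ ⋯ u₀⁻¹ · c₁ ⋯ c_D`
is reduced: the exponents are constant inside each block and adjacent letters of neighbouring
blocks are distinct generators. Its length is `2D + 4m + 1`.
-/

open List

namespace FreeGroup

variable {α : Type*} {L : List (α × Bool)}

theorem isReduced_of_forall_snd_eq {b : Bool} (h : ∀ x ∈ L, x.2 = b) : IsReduced L :=
  (pairwise_of_forall_mem_list (r := fun x y : α × Bool => x.1 = y.1 → x.2 = y.2)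
    fun x hx y hy _ => (h x hx).trans (h y hy).symm).isChain

theorem isReduced_invRev (h : IsReduced L) : IsReduced (invRev L) := by
  simp only [IsReduced, invRev, isChain_reverse, isChain_map]
  exact h.imp fun x y hxy hyx => by simp [hxy hyx.symm]

theorem IsReduced.append_singleton {a : α × Bool} (h : IsReduced L)
    (ha : ∀ x ∈ L.getLast?, x.1 ≠ a.1) : IsReduced (L ++ [a]) :=
  isChain_append.2 ⟨h, .singleton a, fun x hx y hy hxy => by
    obtain rfl : a = y := by simpa using hy
    exact absurd hxy (ha x hx)⟩

theorem IsReduced.append_cons_invRev {a : α × Bool} (h : IsReduced L)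
    (ha : ∀ x ∈ L.getLast?, x.1 ≠ a.1) : IsReduced (L ++ a :: invRev L) := by
  have hleft : IsReduced (L ++ [a]) := h.append_singleton ha
  have hright : IsReduced ([a] ++ invRev L) := by
    simpa [invRev] using isReduced_invRev (h.append_singleton (a := (a.1, !a.2)) ha)
  simpa using hleft.append_overlap hright (cons_ne_nil a [])

theorem mk_append_cons_invRev (a : α × Bool) :
    mk (L ++ a :: invRev L) = mk L * mk [a] * (mk L)⁻¹ := by
  rw [inv_mk, mul_mk, mul_mk, append_assoc, singleton_append]

theorem mk_flatMap {β : Type*} (l : List β) (f : β → List (α × Bool)) :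
    mk (l.flatMap f) = (l.map fun b => mk (f b)).prod := by
  induction l with
  | nil => rfl
  | cons b l ih => rw [flatMap_cons, ← mul_mk, ih, map_cons, prod_cons]

end FreeGroup

open FreeGroup

section Dynamics

variable (D : ℕ)

-- In `F`, `List.range D` is coerced to `List ℤ`, which elaborates to a monadic bind.
lemma F_eq_prod : F D = ((range D).map fun i : ℕ => c (i + 1)).prod := by
  simp only [F, bind_pure_comp, List.map_eq_map, List.map_map]
  rfl

lemma φ_u (i : ℤ) : φ D (u i) = u (i + 1) := lift_apply_of

lemma φ_c_of_ne {i : ℤ} (h : i ≠ D) : φ D (c i) = c (i + 1) :=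
  lift_apply_of.trans (if_neg h)

lemma φ_c_self : φ D (c D) = (F D)⁻¹ * (u 0)⁻¹ * F D :=
  lift_apply_of.trans (if_pos rfl)

lemma iterate_φ_u (m : ℕ) : (φ D)^[m] (u 0) = u m := by
  induction m with
  | zero => rfl
  | succ m ih => rw [Function.iterate_succ_apply', ih, φ_u]; push_cast; rfl

lemma φ_prod_c {k : ℕ} (hk : k < D) :
    φ D ((range k).map fun i : ℕ => c (i + 1)).prod =
      ((range k).map fun i : ℕ => c (i + 2)).prod := by
  rw [map_list_prod, List.map_map]
  refine congrArg _ (List.map_congr_left fun i hi => ?_)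
  rw [Function.comp_apply, φ_c_of_ne D (by have := List.mem_range.1 hi; omega)]
  ring_nf

lemma φ_F (hD : 1 ≤ D) : φ D (F D) = (c 1)⁻¹ * (u 0)⁻¹ * F D := by
  obtain ⟨d, rfl⟩ := Nat.exists_eq_add_of_le' hD
  have hhead : F (d + 1) = c 1 * ((range d).map fun i : ℕ => c (i + 2)).prod := by
    rw [F_eq_prod, prod_range_succ']; push_cast; ring_nf
  have htail : F (d + 1) = F d * c (d + 1 : ℕ) := by
    rw [F_eq_prod, F_eq_prod, prod_range_succ, Nat.cast_succ]
  calc φ (d + 1) (F (d + 1)) = φ (d + 1) (F d) * φ (d + 1) (c (d + 1 : ℕ)) := by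
        rw [htail, _root_.map_mul]
    _ = (c 1)⁻¹ * F (d + 1) * ((F (d + 1))⁻¹ * (u 0)⁻¹ * F (d + 1)) := by
        rw [φ_c_self, F_eq_prod d, φ_prod_c _ (lt_add_one d), hhead]; group
    _ = (c 1)⁻¹ * (u 0)⁻¹ * F (d + 1) := by group

def A (m : ℕ) : G := ((range m).map fun i : ℕ => u i * c (i + 1)).prod

lemma A_succ {m : ℕ} (hm : m < D) : A (m + 1) = u 0 * c 1 * φ D (A m) := by
  have hshift : φ D (A m) = ((range m).map fun i : ℕ => u (i + 1) * c (i + 2)).prod := by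
    rw [A, map_list_prod, List.map_map]
    refine congrArg _ (List.map_congr_left fun i hi => ?_)
    rw [Function.comp_apply, _root_.map_mul, φ_u,
      φ_c_of_ne D (by have := List.mem_range.1 hi; omega)]
    ring_nf
  rw [hshift, A, prod_range_succ']
  push_cast
  ring_nf

lemma iterate_φ_F (hD : 1 ≤ D) {m : ℕ} (hm : m ≤ D) : (φ D)^[m] (F D) = (A m)⁻¹ * F D := by
  induction m with
  | zero => simp [A]
  | succ m ih =>
    rw [Function.iterate_succ_apply', ih (by omega), _root_.map_mul, _root_.map_inv, φ_F D hD,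
      A_succ D (by omega)]
    group

lemma iterate_φ_c_self (hD : 1 ≤ D) {m : ℕ} (hm : m ≤ D) :
    (φ D)^[m + 1] (c D) = (F D)⁻¹ * A m * (u m)⁻¹ * ((F D)⁻¹ * A m)⁻¹ := by
  rw [Function.iterate_succ_apply, φ_c_self]
  simp only [iterate_map_mul, iterate_map_inv, iterate_φ_u, iterate_φ_F D hD hm]
  group

end Dynamics

section Words

def wordF (D : ℕ) : List ((ℤ ⊕ ℤ) × Bool) := (range D).map fun i : ℕ => (Sum.inl (i + 1), true)

def wordA (m : ℕ) : List ((ℤ ⊕ ℤ) × Bool) :=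
  (range m).flatMap fun i : ℕ => [(Sum.inr i, true), (Sum.inl (i + 1), true)]

lemma mk_wordF (D : ℕ) : mk (wordF D) = F D := by
  rw [wordF, map_eq_flatMap, mk_flatMap, F_eq_prod]
  rfl

lemma mk_wordA (m : ℕ) : mk (wordA m) = A m := by
  rw [wordA, mk_flatMap, A]
  rfl

lemma length_wordA (m : ℕ) : (wordA m).length = 2 * m := by
  simp [wordA, mul_comm]

lemma mem_wordF {D : ℕ} {x : (ℤ ⊕ ℤ) × Bool} (hx : x ∈ wordF D) : x.1.isLeft ∧ x.2 = true := by
  obtain ⟨i, -, rfl⟩ := List.mem_map.1 hx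
  exact ⟨rfl, rfl⟩

lemma mem_invRev_wordF {D : ℕ} {x : (ℤ ⊕ ℤ) × Bool} (hx : x ∈ invRev (wordF D)) :
    x.1.isLeft ∧ x.2 = false := by
  simp only [invRev, mem_reverse, mem_map] at hx
  obtain ⟨y, hy, rfl⟩ := hx
  simpa using mem_wordF hy

lemma snd_of_mem_wordA {m : ℕ} {x : (ℤ ⊕ ℤ) × Bool} (hx : x ∈ wordA m) : x.2 = true := by
  simp only [wordA, mem_flatMap, mem_cons, not_mem_nil, or_false] at hx
  obtain ⟨i, -, rfl | rfl⟩ := hx <;> rfl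

lemma head?_wordA (m : ℕ) : ∀ y ∈ (wordA m).head?, y.1.isRight := by
  cases m <;> simp [wordA, range_succ_eq_map]

lemma getLast?_wordA (m : ℕ) : ∀ y ∈ (wordA m).getLast?, y.1.isLeft := by
  cases m <;> simp [wordA, range_succ]

lemma isReduced_invRev_wordF_append_wordA (D m : ℕ) :
    IsReduced (invRev (wordF D) ++ wordA m) := by
  refine isChain_append.2 ⟨isReduced_of_forall_snd_eq fun x hx => (mem_invRev_wordF hx).2,
    isReduced_of_forall_snd_eq fun x hx => snd_of_mem_wordA hx, fun x hx y hy hxy => ?_⟩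
  have hleft := (mem_invRev_wordF (mem_of_mem_getLast? hx)).1
  have hright := head?_wordA m y hy
  rw [hxy] at hleft
  cases hy1 : y.1 <;> simp_all

lemma getLast?_invRev_wordF_append_wordA (D m : ℕ) :
    ∀ x ∈ (invRev (wordF D) ++ wordA m).getLast?, x.1.isLeft := by
  intro x hx
  rw [getLast?_append] at hx
  cases hlast : (wordA m).getLast? with
  | none => exact (mem_invRev_wordF (mem_of_mem_getLast? (by simpa [hlast] using hx))).1
  | some y => exact getLast?_wordA m x (by simpa [hlast] using hx)

end Words

theorem stmt_13 (D : ℕ) (hD : 1 ≤ D) (n : ℕ) (hn1 : 1 ≤ n) (hn2 : n ≤ D + 1) :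
    ((⇑(φ D))^[n] (c D)).toWord.length = 2 * D + 4 * n - 3 := by
  obtain ⟨m, rfl⟩ := Nat.exists_eq_add_of_le' hn1
  set P := invRev (wordF D) ++ wordA m
  have hP : mk P = (F D)⁻¹ * A m := by rw [← mul_mk, ← inv_mk, mk_wordF, mk_wordA]
  have hword : (φ D)^[m + 1] (c D) = mk (P ++ (Sum.inr (m : ℤ), false) :: invRev P) := by
    rw [iterate_φ_c_self D hD (by omega), mk_append_cons_invRev, hP]
    rfl
  have hreduced : IsReduced (P ++ (Sum.inr (m : ℤ), false) :: invRev P) :=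
    (isReduced_invRev_wordF_append_wordA D m).append_cons_invRev fun x hx hx' => by
      simpa [hx'] using getLast?_invRev_wordF_append_wordA D m x hx
  rw [hword, toWord_mk, hreduced.reduce_eq]
  simp [P, wordF, length_wordA, invRev_length]
  omega
end

section
/- For D = 1, define s_N to be the number of occurrences of u₀^{±1} in the reduced word of φ^N(c₁). Then s₁ = 1, s₂ = 2, and s_N = s_{N-1} + 2·s_{N-2} for all N ≥ 3 (the symbolic form of the Epistrophe Continuation and Start Rules: each segment at iterate N−1 continues, and each segment at iterate N−Δ with Δ = D+1 = 2 spawns two new segments). -/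
namespace FreeGroup

variable {α : Type*}

theorem IsReduced.invRev {L : List (α × Bool)} (h : IsReduced L) : IsReduced (invRev L) := by
  classical
  rw [isReduced_iff_reduce_eq, reduce_invRev, h.reduce_eq]

theorem countP_invRev (P : α → Prop) [DecidablePred P] (L : List (α × Bool)) :
    (invRev L).countP (fun l => P l.1) = L.countP (fun l => P l.1) := by
  simp [invRev, List.countP_map, Function.comp_def]

theorem toWord_inv_mul_mk_mul [DecidableEq α] (x : FreeGroup α) (a : α × Bool)
    (h : ∀ p ∈ x.toWord.head?, p.1 ≠ a.1) :
    (x⁻¹ * mk [a] * x).toWord = invRev x.toWord ++ a :: x.toWord := by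
  have cons_reduced : ∀ b : Bool, IsReduced ((a.1, b) :: x.toWord) := by
    intro b
    cases hx : x.toWord with
    | nil => exact .singleton
    | cons p L =>
      rw [isReduced_cons_cons]
      refine ⟨fun hp => absurd hp.symm (h p (by simp [hx])), hx ▸ isReduced_toWord⟩
  have left_reduced : IsReduced (invRev x.toWord ++ [a]) := by
    simpa [invRev] using (cons_reduced (!a.2)).invRev
  have hx : x⁻¹ * mk [a] * x = mk (invRev x.toWord ++ a :: x.toWord) := by
    conv_lhs => rw [← mk_toWord (x := x)]
    simp [inv_mk, mul_mk]
  have right_reduced : IsReduced ([a] ++ x.toWord) := cons_reduced a.2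
  rw [hx, toWord_mk, ← List.singleton_append, ← List.append_assoc]
  exact (left_reduced.append_overlap right_reduced (List.cons_ne_nil _ _)).reduce_eq

end FreeGroup

theorem φ_one_c_one : φ 1 (c 1) = (c 1)⁻¹ * (u 0)⁻¹ * c 1 := by
  simp [φ, c, F]

theorem iterate_φ_one_u (N : ℕ) (m : ℤ) : (⇑(φ 1))^[N] (u m) = u (m + N) := by
  induction N generalizing m with
  | zero => simp
  | succ N ih =>
    rw [Function.iterate_succ_apply, show φ 1 (u m) = u (m + 1) by simp [φ, u], ih]
    congr 1
    push_cast
    ring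

theorem iterate_φ_one_c_one_succ (N : ℕ) :
    (⇑(φ 1))^[N + 1] (c 1) =
      ((⇑(φ 1))^[N] (c 1))⁻¹ * FreeGroup.mk [(Sum.inr (N : ℤ), false)] * (⇑(φ 1))^[N] (c 1) := by
  rw [Function.iterate_succ_apply, φ_one_c_one, iterate_map_mul, iterate_map_mul, iterate_map_inv,
    iterate_map_inv, iterate_φ_one_u, zero_add]
  rfl

theorem head?_getLast?_toWord_iterate_φ_one_c_one (N : ℕ) :
    (∀ p ∈ ((⇑(φ 1))^[N] (c 1)).toWord.head?, p.1 = Sum.inl 1) ∧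
      ((⇑(φ 1))^[N] (c 1)).toWord.getLast? = some (Sum.inl 1, true) := by
  induction N with
  | zero => simp [c]
  | succ N ih =>
    obtain ⟨hhead, hlast⟩ := ih
    rw [iterate_φ_one_c_one_succ, FreeGroup.toWord_inv_mul_mk_mul]
    · simp [FreeGroup.invRev, List.getLast?_cons, hlast]
    · intro p hp
      simp [hhead p hp]

theorem countP_toWord_iterate_φ_one_c_one_succ (N : ℕ) :
    ((⇑(φ 1))^[N + 1] (c 1)).toWord.countP (fun l => l.1 = Sum.inr 0) =
      2 * ((⇑(φ 1))^[N] (c 1)).toWord.countP (fun l => l.1 = Sum.inr 0) + if N = 0 then 1 else 0 := by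
  rw [iterate_φ_one_c_one_succ, FreeGroup.toWord_inv_mul_mk_mul, List.countP_append,
    FreeGroup.countP_invRev (· = Sum.inr 0), List.countP_cons]
  · simp only [Sum.inr.injEq, Nat.cast_eq_zero, decide_eq_true_eq]
    ring
  · intro p hp
    simp [(head?_getLast?_toWord_iterate_φ_one_c_one N).1 p hp]

theorem stmt_15 (s : ℕ → ℕ)
    (hs : ∀ N, s N = ((⇑(φ 1))^[N] (c 1)).toWord.countP (fun l => l.1 = Sum.inr 0)) :
    s 1 = 1 ∧ s 2 = 2 ∧ ∀ N, 3 ≤ N → s N = s (N - 1) + 2 * s (N - 2) := by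
  have hsucc (N : ℕ) : s (N + 1) = 2 * s N + if N = 0 then 1 else 0 := by
    rw [hs, hs, countP_toWord_iterate_φ_one_c_one_succ]
  have hdouble (N : ℕ) : s (N + 2) = 2 * s (N + 1) := by simpa using hsucc (N + 1)
  have h0 : s 0 = 0 := by simp [hs, c]
  refine ⟨by simp [hsucc 0, h0], by simp [hdouble 0, hsucc 0, h0], fun N hN => ?_⟩
  obtain ⟨K, rfl⟩ : ∃ K, N = K + 3 := ⟨N - 3, by omega⟩
  rw [show K + 3 - 1 = K + 2 by omega, show K + 3 - 2 = K + 1 by omega, hdouble (K + 1), hdouble K]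
  ring
end
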